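/- Let ρ = log 2 / log(3/2) (i.e., ρ = log_{3/2} 2). Then for every real p with 0 ≤ p ≤ 1/3, one has (2/3 − 2p)^ρ + (2/3 + p)^ρ ≤ 1. -/

import Mathlib

/-!
Since `ρ = log_{3/2} 2 ≥ 1`, the map `x ↦ x ^ ρ` is convex, with values `0`, `1/2`, `1` at
`0`, `2/3`, `1`. Both `2/3 - 2p` and `2/3 + p` are the convex combination with weight `3p` of
`2/3` and an endpoint (`0`, resp. `1`), so the sum is at most `(1 - 3p) · 1 + 3p · (0 + 1) = 1`.
-/

open Real Set

lemma ConvexOn.map_sub_two_mul_add_map_add_le {f : ℝ → ℝ} (hf : ConvexOn ℝ (Icc 0 1) f)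
    {p : ℝ} (hp0 : 0 ≤ p) (hp1 : p ≤ 1 / 3) :
    f (2 / 3 - 2 * p) + f (2 / 3 + p) ≤ (1 - 3 * p) * (2 * f (2 / 3)) + 3 * p * (f 0 + f 1) := by
  have hmid : (2 / 3 : ℝ) ∈ Icc 0 1 := by norm_num
  have hw : (0 : ℝ) ≤ 1 - 3 * p := by linarith
  have hw' : (0 : ℝ) ≤ 3 * p := by linarith
  have hleft := hf.2 hmid (left_mem_Icc.2 zero_le_one) hw hw' (by ring)
  have hright := hf.2 hmid (right_mem_Icc.2 zero_le_one) hw hw' (by ring)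
  simp only [smul_eq_mul] at hleft hright
  rw [show (1 - 3 * p) * (2 / 3 : ℝ) + 3 * p * 0 = 2 / 3 - 2 * p by ring] at hleft
  rw [show (1 - 3 * p) * (2 / 3 : ℝ) + 3 * p * 1 = 2 / 3 + p by ring] at hright
  linarith

lemma one_le_logb_three_halves_two : 1 ≤ logb (3 / 2) 2 := by
  rw [le_logb_iff_rpow_le (by norm_num) (by norm_num), rpow_one]
  norm_num

lemma two_thirds_rpow_logb_three_halves_two : (2 / 3 : ℝ) ^ logb (3 / 2) 2 = 1 / 2 := by
  rw [show (2 / 3 : ℝ) = (3 / 2)⁻¹ by norm_num, inv_rpow (by norm_num),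
    rpow_logb (by norm_num) (by norm_num) (by norm_num), one_div]

theorem rpow_key_inequality (p : ℝ) (hp0 : 0 ≤ p) (hp1 : p ≤ 1 / 3) :
    (2 / 3 - 2 * p) ^ (Real.log 2 / Real.log (3 / 2))
      + (2 / 3 + p) ^ (Real.log 2 / Real.log (3 / 2)) ≤ 1 := by
  change (2 / 3 - 2 * p) ^ logb (3 / 2) 2 + (2 / 3 + p) ^ logb (3 / 2) 2 ≤ 1
  have hρ := one_le_logb_three_halves_two
  have hconv : ConvexOn ℝ (Icc 0 1) fun x : ℝ ↦ x ^ logb (3 / 2) 2 :=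
    (convexOn_rpow hρ).subset Icc_subset_Ici_self (convex_Icc 0 1)
  have key := hconv.map_sub_two_mul_add_map_add_le hp0 hp1
  rw [two_thirds_rpow_logb_three_halves_two, zero_rpow (by positivity), one_rpow] at key
  linarith
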